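/- For every m ≥ 3, Σ_S (−1)^{|S|} = 0, where S ranges over the connected dominating sets of the 2-by-m grid graph pathGraph m □ pathGraph 2; equivalently, −1 is a root of the connected domination polynomial of pathGraph m □ pathGraph 2. -/

import Mathlib

set_option linter.unusedSectionVars false

noncomputable section

open Finset

/-- A finite simplicial complex on a finite vertex set `V`: a collection of nonempty
subsets of `V` (its faces) containing every singleton and closed under nonempty subsets. -/
structure SComplex (V : Type) [DecidableEq V] [Fintype V] where
  faces : Finset (Finset V)
  nonempty_mem : ∀ σ ∈ faces, σ.Nonempty
  singleton_mem : ∀ v : V, ({v} : Finset V) ∈ faces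
  down_closed : ∀ σ ∈ faces, ∀ τ ⊆ σ, τ.Nonempty → τ ∈ faces

variable {V : Type} [Fintype V] [LinearOrder V]

/-- The induced subcomplex `X[W]`: all faces of `X` contained in `W`. -/
def SComplex.induced (X : SComplex V) (W : Finset V) : Finset (Finset V) :=
  X.faces.filter (fun σ => σ ⊆ W)

theorem SComplex.induced_mono (X : SComplex V) {W W' : Finset V} (h : W ⊆ W') :
    X.induced W ⊆ X.induced W' := by
  intro σ hσ
  simp only [SComplex.induced, mem_filter] at *
  exact ⟨hσ.1, hσ.2.trans h⟩

theorem SComplex.induced_down (X : SComplex V) (W : Finset V) :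
    ∀ σ ∈ X.induced W, ∀ τ ⊆ σ, τ.Nonempty → τ ∈ X.induced W := by
  intro σ hσ τ hτ hne
  simp only [SComplex.induced, mem_filter] at *
  exact ⟨X.down_closed σ hσ.1 τ hτ hne, hτ.trans hσ.2⟩

theorem SComplex.empty_not_mem_induced (X : SComplex V) (W : Finset V) :
    (∅ : Finset V) ∉ X.induced W := by
  simp only [SComplex.induced, mem_filter]
  rintro ⟨h, -⟩
  exact absurd (X.nonempty_mem ∅ h) (by simp)

/-- `faceRemove σ k` is `σ` with its `(k+1)`-st smallest element removed. -/
def faceRemove (σ : Finset V) (k : ℕ) : Finset V :=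
  ((σ.sort (· ≤ ·)).eraseIdx k).toFinset

theorem faceRemove_subset (σ : Finset V) (k : ℕ) : faceRemove σ k ⊆ σ := by
  intro x hx
  rw [faceRemove, List.mem_toFinset] at hx
  have := (List.eraseIdx_subset (l := σ.sort (· ≤ ·)) (k := k)) hx
  rwa [Finset.mem_sort] at this

variable (R : Type) [CommRing R]

/-- The module of `R`-chains supported on the faces of cardinality `n` belonging to `F`
(so of geometric dimension `n - 1`). -/
def Chains (F : Finset (Finset V)) (n : ℕ) : Type :=
  {σ : Finset V // σ ∈ F ∧ σ.card = n} →₀ R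

instance (F : Finset (Finset V)) (n : ℕ) : AddCommGroup (Chains R F n) :=
  inferInstanceAs (AddCommGroup ({σ : Finset V // σ ∈ F ∧ σ.card = n} →₀ R))

instance (F : Finset (Finset V)) (n : ℕ) : Module R (Chains R F n) :=
  inferInstanceAs (Module R ({σ : Finset V // σ ∈ F ∧ σ.card = n} →₀ R))

/-- The basis chain corresponding to a single face. -/
def chainGen (F : Finset (Finset V)) (n : ℕ) (σ : {σ : Finset V // σ ∈ F ∧ σ.card = n}) :
    Chains R F n := Finsupp.single σ (1 : R)

/-- The boundary of a single face of cardinality `i + 1`: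
the alternating sum of its codimension-one subfaces. -/
def bdryGen (F : Finset (Finset V)) (i : ℕ) (σ : Finset V) : Chains R F i :=
  ∑ k ∈ Finset.range (i + 1),
    (-1 : R) ^ k •
      (if h : faceRemove σ k ∈ F ∧ (faceRemove σ k).card = i
        then chainGen R F i ⟨faceRemove σ k, h⟩
        else 0)

/-- The simplicial boundary map, from chains of geometric degree `i` (faces of
cardinality `i + 1`) to chains of geometric degree `i - 1`. -/
def bdry (F : Finset (Finset V)) (i : ℕ) : Chains R F (i + 1) →ₗ[R] Chains R F i :=
  Finsupp.lsum R fun σ => LinearMap.toSpanSingleton R _ (bdryGen R F i σ.1)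

/-- The augmentation map, sending each vertex to `1 : R`. -/
def augment (F : Finset (Finset V)) : Chains R F 1 →ₗ[R] R :=
  Finsupp.lsum R fun _ => LinearMap.id

/-- The submodule of cycles in geometric degree `i`. -/
def cyclesSub (F : Finset (Finset V)) (i : ℕ) : Submodule R (Chains R F (i + 1)) :=
  LinearMap.ker (bdry R F i)

/-- The boundaries, viewed inside the cycles. -/
def bdriesIn (F : Finset (Finset V)) (i : ℕ) : Submodule R (cyclesSub R F i) :=
  (LinearMap.range (bdry R F (i + 1)) ⊓ cyclesSub R F i).comap (cyclesSub R F i).subtype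

/-- The simplicial homology `H_i(F; R)` of a family `F` of faces: cycles modulo
boundaries in geometric degree `i`. -/
def simpH (F : Finset (Finset V)) (i : ℕ) : Type :=
  cyclesSub R F i ⧸ bdriesIn R F i

instance (F : Finset (Finset V)) (i : ℕ) : AddCommGroup (simpH R F i) :=
  inferInstanceAs (AddCommGroup (cyclesSub R F i ⧸ bdriesIn R F i))

instance (F : Finset (Finset V)) (i : ℕ) : Module R (simpH R F i) :=
  inferInstanceAs (Module R (cyclesSub R F i ⧸ bdriesIn R F i))

/-- Reduced cycles: in degree `0` the kernel of the augmentation, in higher degrees the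
usual cycles. -/
def redCycles (F : Finset (Finset V)) : (i : ℕ) → Submodule R (Chains R F (i + 1))
  | 0 => LinearMap.ker (augment R F)
  | (i + 1) => LinearMap.ker (bdry R F (i + 1))

/-- The reduced boundaries, viewed inside the reduced cycles. -/
def redBdriesIn (F : Finset (Finset V)) (i : ℕ) : Submodule R (redCycles R F i) :=
  (LinearMap.range (bdry R F (i + 1)) ⊓ redCycles R F i).comap (redCycles R F i).subtype

/-- Reduced simplicial homology `H̃_i(F; R)`. -/
def redH (F : Finset (Finset V)) (i : ℕ) : Type :=
  redCycles R F i ⧸ redBdriesIn R F i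

instance (F : Finset (Finset V)) (i : ℕ) : AddCommGroup (redH R F i) :=
  inferInstanceAs (AddCommGroup (redCycles R F i ⧸ redBdriesIn R F i))

instance (F : Finset (Finset V)) (i : ℕ) : Module R (redH R F i) :=
  inferInstanceAs (Module R (redCycles R F i ⧸ redBdriesIn R F i))

/-- The chain map induced by an inclusion of families of faces. -/
def chainMap (F F' : Finset (Finset V)) (h : F ⊆ F') (n : ℕ) :
    Chains R F n →ₗ[R] Chains R F' n :=
  Finsupp.lsum R fun σ =>
    LinearMap.toSpanSingleton R _ (chainGen R F' n ⟨σ.1, h σ.2.1, σ.2.2⟩)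

theorem bdry_single (F : Finset (Finset V)) (i : ℕ)
    (σ : {σ : Finset V // σ ∈ F ∧ σ.card = i + 1}) (r : R) :
    bdry R F i (Finsupp.single σ r) = r • bdryGen R F i σ.1 := by
  show (Finsupp.lsum R fun σ => LinearMap.toSpanSingleton R _ (bdryGen R F i σ.1))
      (Finsupp.single σ r) = r • bdryGen R F i σ.1
  rw [Finsupp.lsum_single, LinearMap.toSpanSingleton_apply]

theorem chainMap_single (F F' : Finset (Finset V)) (h : F ⊆ F') (n : ℕ)
    (σ : {σ : Finset V // σ ∈ F ∧ σ.card = n}) (r : R) :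
    chainMap R F F' h n (Finsupp.single σ r) =
      Finsupp.single (⟨σ.1, h σ.2.1, σ.2.2⟩ : {σ : Finset V // σ ∈ F' ∧ σ.card = n}) r := by
  show (Finsupp.lsum R fun σ =>
      LinearMap.toSpanSingleton R _ (chainGen R F' n ⟨σ.1, h σ.2.1, σ.2.2⟩))
      (Finsupp.single σ r) = _
  rw [Finsupp.lsum_single, LinearMap.toSpanSingleton_apply, chainGen]
  exact Finsupp.smul_single_one _ _

theorem chainMap_bdryGen (F F' : Finset (Finset V)) (h : F ⊆ F')
    (hdc : ∀ σ ∈ F, ∀ τ ⊆ σ, τ.Nonempty → τ ∈ F) (hne : (∅ : Finset V) ∉ F') (i : ℕ)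
    (σ : Finset V) (hσ : σ ∈ F) :
    chainMap R F F' h i (bdryGen R F i σ) = bdryGen R F' i σ := by
  unfold bdryGen
  rw [map_sum]
  refine Finset.sum_congr rfl fun k _ => ?_
  rw [map_smul]
  congr 1
  by_cases hc : faceRemove σ k ∈ F ∧ (faceRemove σ k).card = i
  · have hc' : faceRemove σ k ∈ F' ∧ (faceRemove σ k).card = i := ⟨h hc.1, hc.2⟩
    rw [dif_pos hc, dif_pos hc']
    rw [chainGen, chainMap_single]
    rfl
  · have hc' : ¬(faceRemove σ k ∈ F' ∧ (faceRemove σ k).card = i) := by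
      rintro ⟨h1, h2⟩
      refine hc ⟨?_, h2⟩
      have hnonempty : (faceRemove σ k).Nonempty := by
        rcases Finset.eq_empty_or_nonempty (faceRemove σ k) with he | hn
        · rw [he] at h1; exact absurd h1 hne
        · exact hn
      exact hdc σ hσ _ (faceRemove_subset σ k) hnonempty
    rw [dif_neg hc, dif_neg hc']
    rw [map_zero]

theorem bdry_comp_chainMap (F F' : Finset (Finset V)) (h : F ⊆ F')
    (hdc : ∀ σ ∈ F, ∀ τ ⊆ σ, τ.Nonempty → τ ∈ F) (hne : (∅ : Finset V) ∉ F') (i : ℕ) :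
    (bdry R F' i).comp (chainMap R F F' h (i + 1)) =
      (chainMap R F F' h i).comp (bdry R F i) := by
  apply Finsupp.lhom_ext
  intro σ r
  have key : (bdry R F' i) (chainMap R F F' h (i + 1)
        (Finsupp.single σ r : Chains R F (i + 1))) =
      (chainMap R F F' h i) (bdry R F i (Finsupp.single σ r : Chains R F (i + 1))) := by
    rw [chainMap_single, bdry_single, bdry_single, map_smul,
      chainMap_bdryGen R F F' h hdc hne i σ.1 σ.2.1]
  exact key

/-- The map induced on simplicial homology by an inclusion of families of faces. -/
def simpHMap (F F' : Finset (Finset V)) (h : F ⊆ F')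
    (hdc : ∀ σ ∈ F, ∀ τ ⊆ σ, τ.Nonempty → τ ∈ F) (hne : (∅ : Finset V) ∉ F') (i : ℕ) :
    simpH R F i →ₗ[R] simpH R F' i :=
  Submodule.mapQ (bdriesIn R F i) (bdriesIn R F' i)
    ((chainMap R F F' h (i + 1)).restrict (p := cyclesSub R F i) (q := cyclesSub R F' i)
      (fun x hx => by
        have hcomm := congrArg (fun φ => φ x) (bdry_comp_chainMap R F F' h hdc hne i)
        simp only [LinearMap.comp_apply] at hcomm
        simp only [cyclesSub, LinearMap.mem_ker] at hx ⊢
        rw [hcomm, hx, map_zero]))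
    (by
      rintro ⟨x, hxker⟩ hx
      simp only [bdriesIn, Submodule.mem_comap, Submodule.mem_inf, Submodule.coe_subtype,
        LinearMap.mem_range] at hx ⊢
      obtain ⟨⟨y, hy⟩, -⟩ := hx
      constructor
      · refine ⟨chainMap R F F' h (i + 2) y, ?_⟩
        have hcomm := congrArg (fun φ => φ y) (bdry_comp_chainMap R F F' h hdc hne (i + 1))
        simp only [LinearMap.comp_apply] at hcomm
        rw [LinearMap.restrict_coe_apply, hcomm, hy]
      · exact (((chainMap R F F' h (i + 1)).restrict _) ⟨x, hxker⟩).2)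

/-- The `j`-th chain module of the weight-`0`, dimension-`i` überhomology complex:
the direct sum over all vertex subsets `S` of cardinality `j` of `H_i(X[S]; R)`. -/
def UC (X : SComplex V) (i j : ℕ) : Type :=
  DirectSum {S : Finset V // S.card = j} fun S => simpH R (X.induced S.1) i

instance (X : SComplex V) (i j : ℕ) : AddCommGroup (UC R X i j) :=
  inferInstanceAs
    (AddCommGroup (DirectSum {S : Finset V // S.card = j} fun S => simpH R (X.induced S.1) i))

instance (X : SComplex V) (i j : ℕ) : Module R (UC R X i j) :=
  inferInstanceAs
    (Module R (DirectSum {S : Finset V // S.card = j} fun S => simpH R (X.induced S.1) i))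

/-- The differential of the weight-`0` überhomology complex; its component from the
summand of `S` to the summand of `S ∪ {v}` (for `v ∉ S`) is `(-1) ^ #{u ∈ S | u < v}`
times the map induced on homology by the inclusion `X[S] ⊆ X[S ∪ {v}]`. -/
def uberd (X : SComplex V) (i j : ℕ) : UC R X i j →ₗ[R] UC R X i (j + 1) :=
  DirectSum.toModule R _ _ fun S =>
    ∑ v ∈ S.1ᶜ.attach,
      ((-1 : R) ^ (S.1.filter fun u => u < v.1).card) •
        ((DirectSum.lof R {T : Finset V // T.card = j + 1}
              (fun T => simpH R (X.induced T.1) i)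
              ⟨insert v.1 S.1, by
                rw [Finset.card_insert_of_notMem (Finset.mem_compl.mp v.2), S.2]⟩).comp
          (simpHMap R (X.induced S.1) (X.induced (insert v.1 S.1))
            (X.induced_mono (Finset.subset_insert _ _))
            (X.induced_down S.1) (X.empty_not_mem_induced _) i))

/-- The submodule of über-coboundaries in cohomological degree `j`. -/
def uberBdries (X : SComplex V) (i : ℕ) : (j : ℕ) → Submodule R (UC R X i j)
  | 0 => ⊥
  | (j + 1) => LinearMap.range (uberd R X i j)

/-- The über-cocycles in cohomological degree `j`. -/
def uberCycles (X : SComplex V) (i j : ℕ) : Submodule R (UC R X i j) :=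
  LinearMap.ker (uberd R X i j)

/-- The über-coboundaries, viewed inside the über-cocycles. -/
def uberBdriesIn (X : SComplex V) (i j : ℕ) : Submodule R (uberCycles R X i j) :=
  (uberBdries R X i j ⊓ uberCycles R X i j).comap (uberCycles R X i j).subtype

/-- The `0`-degree überhomology `B^j_i(X; R)`: the homology at position `j` of the
cochain complex `(UC R X i •, uberd)`. -/
def uberB (X : SComplex V) (j i : ℕ) : Type :=
  uberCycles R X i j ⧸ uberBdriesIn R X i j

instance (X : SComplex V) (j i : ℕ) : AddCommGroup (uberB R X j i) :=
  inferInstanceAs (AddCommGroup (uberCycles R X i j ⧸ uberBdriesIn R X i j))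

instance (X : SComplex V) (j i : ℕ) : Module R (uberB R X j i) :=
  inferInstanceAs (Module R (uberCycles R X i j ⧸ uberBdriesIn R X i j))

/-- Bold homology `𝔹^j(X; R) := B^j_0(X; R)`. -/
abbrev Bold (X : SComplex V) (j : ℕ) : Type := uberB R X j 0

/-- The Euler characteristic of a simplicial complex. -/
def eulerChar (X : SComplex V) : ℤ := ∑ σ ∈ X.faces, (-1 : ℤ) ^ (σ.card - 1)

/-- The 1-skeleton of a simplicial complex, as a simple graph. -/
def oneSkeleton (X : SComplex V) : SimpleGraph V where
  Adj u v := u ≠ v ∧ ({u, v} : Finset V) ∈ X.faces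
  symm := by
    constructor
    intro u v h
    exact ⟨h.1.symm, by rw [Finset.pair_comm]; exact h.2⟩
  loopless := ⟨fun v h => h.1 rfl⟩

/-- A connected dominating set of a simple graph: a nonempty vertex set inducing a
connected subgraph such that every vertex lies in it or is adjacent to it. -/
def IsConnDomSet (G : SimpleGraph V) (S : Finset V) : Prop :=
  S.Nonempty ∧ (G.induce (S : Set V)).Connected ∧
    ∀ v : V, v ∈ S ∨ ∃ u ∈ S, G.Adj u v

section Classical
open Classical in
/-- A finite simple graph regarded as a 1-dimensional simplicial complex: its faces are
the singletons and the edges. -/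
def graphComplex (G : SimpleGraph V) : SComplex V where
  faces := Finset.univ.filter fun σ => (∃ v, σ = {v}) ∨ ∃ u v, G.Adj u v ∧ σ = {u, v}
  nonempty_mem := by
    intro σ hσ
    simp only [mem_filter, mem_univ, true_and] at hσ
    rcases hσ with ⟨v, rfl⟩ | ⟨u, v, -, rfl⟩
    · exact ⟨v, by simp⟩
    · exact ⟨u, by simp⟩
  singleton_mem := by
    intro v
    simp only [mem_filter, mem_univ, true_and]
    exact Or.inl ⟨v, rfl⟩
  down_closed := by
    intro σ hσ τ hτ hne
    simp only [mem_filter, mem_univ, true_and] at hσ ⊢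
    have h1 : 1 ≤ τ.card := Finset.card_pos.mpr hne
    rcases Nat.lt_or_ge τ.card 2 with h2 | h2
    · have hcard : τ.card = 1 := by omega
      obtain ⟨w, rfl⟩ := Finset.card_eq_one.mp hcard
      exact Or.inl ⟨w, rfl⟩
    · rcases hσ with ⟨v, rfl⟩ | ⟨u, v, hadj, rfl⟩
      · have := Finset.card_le_card hτ
        simp only [Finset.card_singleton] at this
        omega
      · have hcard : ({u, v} : Finset V).card ≤ 2 :=
          (Finset.card_insert_le u {v}).trans (by simp)
        have : τ = {u, v} := Finset.eq_of_subset_of_card_le hτ (by omega)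
        exact Or.inr ⟨u, v, hadj, this⟩

open Classical in
/-- The connected domination polynomial of `G` evaluated at `-1`:
`D_c(G)(-1) = Σ_S (-1)^{|S|}` over connected dominating sets `S`. -/
def cdSum (G : SimpleGraph V) : ℤ :=
  ∑ S ∈ Finset.univ.filter (fun S : Finset V => IsConnDomSet G S), (-1 : ℤ) ^ S.card

end Classical

end

/-- An auxiliary linear order on the vertices of the 2-by-m grid. -/
instance (m : ℕ) : LinearOrder (Fin m × Fin 2) :=
  LinearOrder.lift' (fun p => 2 * p.1.val + p.2.val) (by
    intro p q h
    simp only at h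
    have hp := p.2.isLt
    have hq := q.2.isLt
    have h1 : p.1.val = q.1.val := by omega
    have h2 : p.2.val = q.2.val := by omega
    exact Prod.ext (Fin.ext h1) (Fin.ext h2))

section CDAux
open SimpleGraph
variable {α β : Type*}

lemma reach_map {G : SimpleGraph α} {H : SimpleGraph β} {f : α → β}
    (hf : ∀ x y, G.Adj x y → H.Reachable (f x) (f y)) {x y : α} (r : G.Reachable x y) :
    H.Reachable (f x) (f y) := by
  obtain ⟨w⟩ := r
  induction w with
  | nil => exact Reachable.refl _
  | cons h p ih => exact (hf _ _ h).trans ih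

lemma reach_ind {G : SimpleGraph α} {P : α → Prop}
    (h : ∀ x y, G.Adj x y → P x → P y) {x y : α} (r : G.Reachable x y) (hx : P x) : P y := by
  obtain ⟨w⟩ := r
  induction w with
  | nil => exact hx
  | cons ha p ih => exact ih (h _ _ ha hx)

lemma conn_of_maps {G : SimpleGraph α} {s t : Set α}
    (hc : (G.induce s).Connected) (f : s → t)
    (hf : ∀ x y : s, (G.induce s).Adj x y → (G.induce t).Reachable (f x) (f y))
    (hcover : ∀ b : t, ∃ a : s, (G.induce t).Reachable b (f a)) :
    (G.induce t).Connected := by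
  obtain ⟨a0⟩ := hc.nonempty
  rw [connected_iff]
  refine ⟨fun b c => ?_, ⟨f a0⟩⟩
  obtain ⟨a, ha⟩ := hcover b
  obtain ⟨a', ha'⟩ := hcover c
  exact ha.trans ((reach_map hf (hc.preconnected a a')).trans ha'.symm)

variable [DecidableEq α]

lemma conn_insert {G : SimpleGraph α} {S : Finset α} {v u : α}
    (hc : (G.induce (S : Set α)).Connected) (hu : u ∈ S) (ha : G.Adj u v) :
    (G.induce ((insert v S : Finset α) : Set α)).Connected := by
  refine conn_of_maps hc (fun a => ⟨a.1, by simp⟩) (fun x y hxy => ?_) (fun b => ?_)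
  · exact Adj.reachable (by simpa using hxy)
  · by_cases hb : b.1 ∈ S
    · exact ⟨⟨b.1, hb⟩, Reachable.refl _⟩
    · have hbv : b.1 = v := by
        have := b.2; simp only [Finset.coe_insert, Set.mem_insert_iff, Finset.mem_coe] at this
        tauto
      refine ⟨⟨u, hu⟩, Adj.reachable ?_⟩
      show G.Adj b.1 u
      rw [hbv]; exact ha.symm

lemma conn_erase {G : SimpleGraph α} {S : Finset α} {v u₀ : α}
    (hc : (G.induce (S : Set α)).Connected) (hu : u₀ ∈ S.erase v)
    (hnb : ∀ y, (hy : y ∈ S.erase v) → G.Adj v y →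
      (G.induce ((S.erase v : Finset α) : Set α)).Reachable ⟨u₀, Finset.mem_coe.mpr hu⟩
        ⟨y, Finset.mem_coe.mpr hy⟩) :
    (G.induce ((S.erase v : Finset α) : Set α)).Connected := by
  classical
  refine conn_of_maps hc
    (fun a => if h : a.1 = v then ⟨u₀, Finset.mem_coe.mpr hu⟩ else
      ⟨a.1, Finset.mem_coe.mpr (Finset.mem_erase.mpr ⟨h, Finset.mem_coe.mp a.2⟩)⟩)
    (fun x y hxy => ?_) (fun b => ?_)
  · have hadj : G.Adj x.1 y.1 := by simpa using hxy
    by_cases hx : x.1 = v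
    · have hy : y.1 ≠ v := by
        intro h; rw [hx, h] at hadj; exact G.loopless.irrefl v hadj
      have hyS : y.1 ∈ S.erase v := Finset.mem_erase.mpr ⟨hy, by simpa using y.2⟩
      simp only [dif_pos hx, dif_neg hy]
      exact hnb y.1 hyS (hx ▸ hadj)
    · by_cases hy : y.1 = v
      · have hxS : x.1 ∈ S.erase v := Finset.mem_erase.mpr ⟨hx, by simpa using x.2⟩
        simp only [dif_pos hy, dif_neg hx]
        exact (hnb x.1 hxS (hy ▸ hadj.symm)).symm
      · simp only [dif_neg hx, dif_neg hy]
        exact Adj.reachable (by simpa using hadj)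
  · have hb : b.1 ∈ S.erase v := by simpa using b.2
    have hbv : b.1 ≠ v := (Finset.mem_erase.mp hb).1
    have hbS : b.1 ∈ S := (Finset.mem_erase.mp hb).2
    refine ⟨⟨b.1, by simpa using hbS⟩, ?_⟩
    simp only [dif_neg hbv]
    exact Reachable.refl _

lemma exists_adj_of_conn {G : SimpleGraph α} {S : Finset α} {x y : α}
    (hc : (G.induce (S : Set α)).Connected) (hx : x ∈ S) (hy : y ∈ S) (hxy : x ≠ y) :
    ∃ z ∈ S, G.Adj x z := by
  by_contra hno
  push_neg at hno
  have key : ∀ a b : (S : Set α), (G.induce (S : Set α)).Adj a b → a.1 = x → b.1 = x := by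
    intro a b hab ha
    exact absurd (by rw [← ha]; simpa using hab) (hno b.1 (Finset.mem_coe.mp b.2))
  have := reach_ind key
    (hc.preconnected ⟨x, Finset.mem_coe.mpr hx⟩ ⟨y, Finset.mem_coe.mpr hy⟩) rfl
  exact hxy (by simpa using this.symm)

lemma cds_insert {α : Type} [Fintype α] [LinearOrder α] {G : SimpleGraph α} {S : Finset α}
    (h : IsConnDomSet G S) (v : α) : IsConnDomSet G (insert v S) := by
  classical
  refine ⟨Finset.insert_nonempty _ _, ?_, fun w => ?_⟩
  · by_cases hv : v ∈ S
    · rw [Finset.insert_eq_self.mpr hv]; exact h.2.1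
    · rcases h.2.2 v with hvS | ⟨u, hu, hadj⟩
      · exact absurd hvS hv
      · exact conn_insert h.2.1 hu hadj
  · rcases h.2.2 w with hw | ⟨u, hu, hadj⟩
    · exact Or.inl (Finset.mem_insert_of_mem hw)
    · exact Or.inr ⟨u, Finset.mem_insert_of_mem hu, hadj⟩

lemma cds_insert' {α : Type} [Fintype α] [LinearOrder α] {G : SimpleGraph α} {S T : Finset α}
    (h : IsConnDomSet G S) (v : α) (hT : ∀ x, x ∈ T ↔ x = v ∨ x ∈ S) : IsConnDomSet G T := by
  classical
  have hTe : T = insert v S := Finset.ext (by simp [hT])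
  rw [hTe]
  exact cds_insert h v

end CDAux

/-- For `m ≥ 3`, `Σ_S (-1)^{|S|} = 0` over connected dominating sets `S` of
the 2-by-m grid graph `pathGraph m □ pathGraph 2`; equivalently, `-1` is a root of its
connected domination polynomial. -/
theorem cdSum_grid_eq_zero (m : ℕ) (hm : 3 ≤ m) :
    cdSum (SimpleGraph.boxProd (SimpleGraph.pathGraph m) (SimpleGraph.pathGraph 2)) = 0 := by
  classical
  set G := SimpleGraph.boxProd (SimpleGraph.pathGraph m) (SimpleGraph.pathGraph 2) with hG
  have h0 : 0 < m := by omega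
  have h1 : 1 < m := by omega
  have h2 : 2 < m := by omega
  set v00 : Fin m × Fin 2 := (⟨0, h0⟩, 0) with hv00
  set v01 : Fin m × Fin 2 := (⟨0, h0⟩, 1) with hv01
  set v10 : Fin m × Fin 2 := (⟨1, h1⟩, 0) with hv10
  set v11 : Fin m × Fin 2 := (⟨1, h1⟩, 1) with hv11
  set v20 : Fin m × Fin 2 := (⟨2, h2⟩, 0) with hv20
  set v21 : Fin m × Fin 2 := (⟨2, h2⟩, 1) with hv21
  -- adjacency characterization
  have hadjIff : ∀ p q : Fin m × Fin 2, G.Adj p q ↔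
      ((p.1.val + 1 = q.1.val ∨ q.1.val + 1 = p.1.val) ∧ p.2.val = q.2.val ∨
       (p.2.val + 1 = q.2.val ∨ q.2.val + 1 = p.2.val) ∧ p.1.val = q.1.val) := by
    intro p q
    rw [hG]
    rw [SimpleGraph.boxProd_adj, SimpleGraph.pathGraph_adj, SimpleGraph.pathGraph_adj]
    simp only [Fin.ext_iff]
  have veq : ∀ u w : Fin m × Fin 2, u.1.val = w.1.val → u.2.val = w.2.val → u = w := by
    intro u w ha hb
    exact Prod.ext (Fin.ext ha) (Fin.ext hb)
  -- basic adjacencies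
  have a1000 : G.Adj v10 v00 := by rw [hadjIff]; simp [hv10, hv00]
  have a1011 : G.Adj v10 v11 := by rw [hadjIff]; simp [hv10, hv11]
  have a0100 : G.Adj v01 v00 := by rw [hadjIff]; simp [hv01, hv00]
  have a0111 : G.Adj v01 v11 := by rw [hadjIff]; simp [hv01, hv11]
  have a2010 : G.Adj v20 v10 := by rw [hadjIff]; simp [hv20, hv10]
  -- neighbor classifications
  have nb01 : ∀ u : Fin m × Fin 2, G.Adj u v01 → u = v00 ∨ u = v11 := by
    intro u h
    rw [hadjIff] at h
    simp only [hv01] at h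
    rcases h with ⟨h, h'⟩ | ⟨h, h'⟩
    · exact Or.inr (veq u v11 (by simp [hv11]; omega) (by simp [hv11]; omega))
    · have := u.2.isLt
      exact Or.inl (veq u v00 (by simp [hv00]; omega) (by simp [hv00]; omega))
  have nb00 : ∀ u : Fin m × Fin 2, G.Adj u v00 → u = v01 ∨ u = v10 := by
    intro u h
    rw [hadjIff] at h
    simp only [hv00] at h
    rcases h with ⟨h, h'⟩ | ⟨h, h'⟩
    · exact Or.inr (veq u v10 (by simp [hv10]; omega) (by simp [hv10]; omega))
    · have := u.2.isLt
      exact Or.inl (veq u v01 (by simp [hv01]; omega) (by simp [hv01]; omega))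
  have nb21 : ∀ u : Fin m × Fin 2, G.Adj u v21 → u ≠ v00 := by
    intro u h heq
    rw [heq, hadjIff] at h
    simp only [hv00, hv21] at h
    omega
  have nb20 : ∀ u : Fin m × Fin 2, G.Adj u v20 → u = v10 ∨ 2 ≤ u.1.val := by
    intro u h
    rw [hadjIff] at h
    simp only [hv20] at h
    by_cases hc2 : 2 ≤ u.1.val
    · exact Or.inr hc2
    · refine Or.inl (veq u v10 (by simp [hv10]; omega) (by simp [hv10]; omega))
  -- distinctness
  have ne0100 : v01 ≠ v00 := by simp [hv01, hv00, Prod.ext_iff, Fin.ext_iff]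
  have ne0110 : v01 ≠ v10 := by simp [hv01, hv10, Prod.ext_iff, Fin.ext_iff]
  have ne0111 : v01 ≠ v11 := by simp [hv01, hv11, Prod.ext_iff, Fin.ext_iff]
  have ne0010 : v00 ≠ v10 := by simp [hv00, hv10, Prod.ext_iff, Fin.ext_iff]
  have ne0011 : v00 ≠ v11 := by simp [hv00, hv11, Prod.ext_iff, Fin.ext_iff]
  have ne0020 : v00 ≠ v20 := by simp [hv00, hv20, Prod.ext_iff, Fin.ext_iff]
  have ne0021 : v00 ≠ v21 := by simp [hv00, hv21, Prod.ext_iff, Fin.ext_iff]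
  -- the involution
  set tog : Finset (Fin m × Fin 2) → Finset (Fin m × Fin 2) := fun S =>
    if v10 ∈ S then (if v01 ∈ S then S.erase v01 else insert v01 S)
    else (if v00 ∈ S then S.erase v00 else insert v00 S) with htog
  -- main: tog preserves CDS
  have hmain : ∀ S : Finset (Fin m × Fin 2), IsConnDomSet G S → IsConnDomSet G (tog S) := by
    intro S hS
    rw [htog]
    by_cases h10 : v10 ∈ S
    · by_cases h01 : v01 ∈ S
      · simp only [if_pos h10, if_pos h01]
        -- erase v01
        obtain ⟨z, hzS, hzadj⟩ := exists_adj_of_conn hS.2.1 h01 h10 ne0110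
        have hD : v00 ∈ S ∨ v11 ∈ S := by
          rcases nb01 z hzadj.symm with h | h
          · exact Or.inl (h ▸ hzS)
          · exact Or.inr (h ▸ hzS)
        refine ⟨⟨v10, Finset.mem_erase.mpr ⟨Ne.symm ne0110, h10⟩⟩, ?_, ?_⟩
        · refine conn_erase hS.2.1 (Finset.mem_erase.mpr ⟨Ne.symm ne0110, h10⟩) ?_
          intro y hy hady
          refine SimpleGraph.Adj.reachable ?_
          have hys : G.Adj v10 y := by
            rcases nb01 y hady.symm with rfl | rfl
            · exact a1000
            · exact a1011
          simpa using hys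
        · intro w
          rcases hS.2.2 w with hw | ⟨u, hu, hadj⟩
          · by_cases hwv : w = v01
            · refine Or.inr ?_
              rcases hD with h | h
              · exact ⟨v00, Finset.mem_erase.mpr ⟨Ne.symm ne0100, h⟩,
                  by rw [hwv]; exact a0100.symm⟩
              · exact ⟨v11, Finset.mem_erase.mpr ⟨Ne.symm ne0111, h⟩,
                  by rw [hwv]; exact a0111.symm⟩
            · exact Or.inl (Finset.mem_erase.mpr ⟨hwv, hw⟩)
          · by_cases huv : u = v01
            · subst huv
              rcases nb01 w hadj.symm with rfl | rfl
              · exact Or.inr ⟨v10, Finset.mem_erase.mpr ⟨Ne.symm ne0110, h10⟩, a1000⟩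
              · exact Or.inr ⟨v10, Finset.mem_erase.mpr ⟨Ne.symm ne0110, h10⟩, a1011⟩
            · exact Or.inr ⟨u, Finset.mem_erase.mpr ⟨huv, hu⟩, hadj⟩
      · simp only [if_pos h10, if_neg h01]
        exact cds_insert' hS v01 (fun x => by simp)
    · by_cases h00 : v00 ∈ S
      · simp only [if_neg h10, if_pos h00]
        have hw2 : ∃ w ∈ S, w ≠ v00 := by
          rcases hS.2.2 v21 with h | ⟨u, hu, hadj⟩
          · exact ⟨v21, h, Ne.symm ne0021⟩
          · exact ⟨u, hu, nb21 u hadj⟩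
        obtain ⟨w2, hw2S, hw2ne⟩ := hw2
        obtain ⟨z, hzS, hzadj⟩ := exists_adj_of_conn hS.2.1 h00 hw2S (Ne.symm hw2ne)
        have h01S : v01 ∈ S := by
          rcases nb00 z hzadj.symm with h | h
          · exact h ▸ hzS
          · exact absurd (h ▸ hzS) h10
        have hK : v11 ∈ S ∨ v20 ∈ S := by
          by_contra hcon
          push_neg at hcon
          obtain ⟨hn11, hn20⟩ := hcon
          have hfar : ∃ w ∈ S, 2 ≤ w.1.val := by
            rcases hS.2.2 v20 with h | ⟨u, hu, hadj⟩
            · exact absurd h hn20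
            · rcases nb20 u hadj with rfl | h
              · exact absurd hu h10
              · exact ⟨u, hu, h⟩
          obtain ⟨wf, hwfS, hwf2⟩ := hfar
          have key : ∀ a b : (S : Set (Fin m × Fin 2)),
              (G.induce (S : Set (Fin m × Fin 2))).Adj a b → a.1.1.val = 0 → b.1.1.val = 0 := by
            intro a b hab ha
            have hadj' : G.Adj a.1 b.1 := by simpa using hab
            rw [hadjIff] at hadj'
            have hb2 := b.1.2.isLt
            have hbS : b.1 ∈ S := Finset.mem_coe.mp b.2
            by_contra hb0
            have hb1 : b.1 = v10 ∨ b.1 = v11 := by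
              by_cases hr : b.1.2.val = 0
              · exact Or.inl (veq _ _ (by simp only [hv10]; omega) (by simp only [hv10]; omega))
              · exact Or.inr (veq _ _ (by simp only [hv11]; omega) (by simp only [hv11]; omega))
            rcases hb1 with h | h
            · exact h10 (h ▸ hbS)
            · exact hn11 (h ▸ hbS)
          have hconc := reach_ind key (hS.2.1.preconnected ⟨v00, Finset.mem_coe.mpr h00⟩
            ⟨wf, Finset.mem_coe.mpr hwfS⟩) (by simp [hv00])
          have hconc' : wf.1.val = 0 := hconc
          omega
        refine ⟨⟨v01, Finset.mem_erase.mpr ⟨ne0100, h01S⟩⟩, ?_, ?_⟩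
        · refine conn_erase hS.2.1 (Finset.mem_erase.mpr ⟨ne0100, h01S⟩) ?_
          intro y hy hady
          have hyv : y = v01 := by
            rcases nb00 y hady.symm with h | h
            · exact h
            · exact absurd (h ▸ (Finset.mem_erase.mp hy).2) h10
          subst hyv
          exact SimpleGraph.Reachable.refl _
        · intro w
          rcases hS.2.2 w with hw | ⟨u, hu, hadj⟩
          · by_cases hwv : w = v00
            · exact Or.inr ⟨v01, Finset.mem_erase.mpr ⟨ne0100, h01S⟩,
                by rw [hwv]; exact a0100⟩
            · exact Or.inl (Finset.mem_erase.mpr ⟨hwv, hw⟩)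
          · by_cases huv : u = v00
            · subst huv
              rcases nb00 w hadj.symm with rfl | rfl
              · exact Or.inl (Finset.mem_erase.mpr ⟨ne0100, h01S⟩)
              · rcases hK with h | h
                · exact Or.inr ⟨v11, Finset.mem_erase.mpr ⟨Ne.symm ne0011, h⟩, a1011.symm⟩
                · exact Or.inr ⟨v20, Finset.mem_erase.mpr ⟨Ne.symm ne0020, h⟩, a2010⟩
            · exact Or.inr ⟨u, Finset.mem_erase.mpr ⟨huv, hu⟩, hadj⟩
      · simp only [if_neg h10, if_neg h00]
        exact cds_insert' hS v00 (fun x => by simp)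
  have hne1001 : v10 ≠ v01 := Ne.symm ne0110
  have hne1000 : v10 ≠ v00 := Ne.symm ne0010
  have htogtog : ∀ S, tog (tog S) = S := by
    intro S
    simp only [htog]
    by_cases h10 : v10 ∈ S
    · by_cases h01 : v01 ∈ S
      · simp only [if_pos h10, if_pos h01]
        have h10' : v10 ∈ S.erase v01 := Finset.mem_erase.mpr ⟨hne1001, h10⟩
        have h01' : v01 ∉ S.erase v01 := Finset.notMem_erase _ _
        simp only [if_pos h10', if_neg h01']
        exact Finset.insert_erase h01
      · simp only [if_pos h10, if_neg h01]
        have h10' : v10 ∈ insert v01 S := Finset.mem_insert_of_mem h10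
        have h01' : v01 ∈ insert v01 S := Finset.mem_insert_self _ _
        simp only [if_pos h10', if_pos h01']
        exact Finset.erase_insert h01
    · by_cases h00 : v00 ∈ S
      · simp only [if_neg h10, if_pos h00]
        have h10' : v10 ∉ S.erase v00 := fun h => h10 (Finset.mem_of_mem_erase h)
        have h00' : v00 ∉ S.erase v00 := Finset.notMem_erase _ _
        simp only [if_neg h10', if_neg h00']
        exact Finset.insert_erase h00
      · simp only [if_neg h10, if_neg h00]
        have h10' : v10 ∉ insert v00 S := by
          simp only [Finset.mem_insert]
          rintro (h | h)
          · exact hne1000 h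
          · exact h10 h
        have h00' : v00 ∈ insert v00 S := Finset.mem_insert_self _ _
        simp only [if_neg h10', if_pos h00']
        exact Finset.erase_insert h00
  have hpow : ∀ n : ℕ, (-1 : ℤ) ^ (n + 1) + (-1 : ℤ) ^ n = 0 := by
    intro n; rw [pow_succ]; ring
  have hcard : ∀ S : Finset (Fin m × Fin 2),
      (-1 : ℤ) ^ S.card + (-1 : ℤ) ^ (tog S).card = 0 := by
    intro S
    simp only [htog]
    split_ifs with h10 h01 h00
    · obtain ⟨k, hk⟩ : ∃ k, S.card = k + 1 :=
        ⟨S.card - 1, by have := Finset.card_pos.mpr ⟨v01, h01⟩; omega⟩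
      rw [Finset.card_erase_of_mem h01, hk, Nat.add_sub_cancel]
      exact hpow k
    · rw [Finset.card_insert_of_notMem h01, add_comm]
      exact hpow S.card
    · obtain ⟨k, hk⟩ : ∃ k, S.card = k + 1 :=
        ⟨S.card - 1, by have := Finset.card_pos.mpr ⟨v00, h00⟩; omega⟩
      rw [Finset.card_erase_of_mem h00, hk, Nat.add_sub_cancel]
      exact hpow k
    · rw [Finset.card_insert_of_notMem h00, add_comm]
      exact hpow S.card
  have hnet : ∀ S : Finset (Fin m × Fin 2), tog S ≠ S := by
    intro S
    simp only [htog]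
    split_ifs with h10 h01 h00
    · intro h
      apply Finset.notMem_erase v01 S
      rw [h]; exact h01
    · intro h
      apply h01
      rw [← h]; exact Finset.mem_insert_self _ _
    · intro h
      apply Finset.notMem_erase v00 S
      rw [h]; exact h00
    · intro h
      apply h00
      rw [← h]; exact Finset.mem_insert_self _ _
  rw [cdSum]
  refine Finset.sum_involution (fun S _ => tog S) ?_ ?_ ?_ ?_
  · intro S _
    exact hcard S
  · intro S _ _
    exact hnet S
  · intro S hSmem
    simp only [Finset.mem_filter, Finset.mem_univ, true_and] at hSmem ⊢
    exact hmain S hSmem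
  · intro S _
    exact htogtog S
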